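/- In the blow-up chart with coordinates (x,v), for a formal vector field X of order ≥ 2 acting on C[[x,y]] via y = xv: the second component of the lifted diffeomorphism satisfies exp X(y)/exp X(x) = exp X̃(v), i.e., (exp X(x) · exp X̃(v)) = exp X(xv), as identities of formal Laurent/power series, where X̃ is the pullback of X. -/

import Mathlib

open Finsupp

noncomputable section

abbrev F2 : Type := MvPowerSeries (Fin 2) ℂ

/-- total degree of a monomial exponent -/
def deg (d : Fin 2 →₀ ℕ) : ℕ := d 0 + d 1

/-- the exponent (m, n) -/
def idx (m n : ℕ) : Fin 2 →₀ ℕ := Finsupp.single 0 m + Finsupp.single 1 n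

/-- partial derivative of a formal power series -/
def pd (i : Fin 2) (f : F2) : F2 :=
  fun d => ((d i : ℂ) + 1) * MvPowerSeries.coeff (d + Finsupp.single i 1) f

/-- the derivation a ∂/∂x + b ∂/∂y applied to g -/
def vf (a b g : F2) : F2 := a * pd 0 g + b * pd 1 g

/-- `ordGE f k` : the order ν(f) is at least k -/
def ordGE (f : F2) (k : ℕ) : Prop :=
  ∀ d : Fin 2 →₀ ℕ, deg d < k → MvPowerSeries.coeff d f = 0

/-- exp X (g) = Σ_j (1/j!) X^j(g), coefficientwise -/
def expX (a b g : F2) : F2 :=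
  fun d => ∑' j : ℕ, ((j.factorial : ℂ))⁻¹ * MvPowerSeries.coeff d ((vf a b)^[j] g)

/-- degree-k homogeneous part -/
def HT (k : ℕ) (f : F2) : F2 :=
  fun d => if deg d = k then MvPowerSeries.coeff d f else 0

/-- substitution y := x·v :  f(x, xv), in coordinates (x, v) -/
def blowup (f : F2) : F2 :=
  fun d => if d 1 ≤ d 0 then MvPowerSeries.coeff (idx (d 0 - d 1) (d 1)) f else 0

/-- `dehom k f` = f_k(1, v), where f_k is the degree-k homogeneous part of f -/
def dehom (k : ℕ) (f : F2) : F2 :=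
  fun d => if d 0 = 0 ∧ d 1 ≤ k then MvPowerSeries.coeff (idx (k - d 1) (d 1)) f else 0

/-- evaluation of the degree-k homogeneous part of f at (1, v0) -/
def evk (k : ℕ) (v0 : ℂ) (f : F2) : ℂ :=
  ∑ n ∈ Finset.range (k+1), MvPowerSeries.coeff (idx (k-n) n) f * v0 ^ n

/-- the linear change of coordinates f(x, y) ↦ f(x, y + v0·x) -/
def shear (v0 : ℂ) (f : F2) : F2 :=
  fun d => ∑ j ∈ Finset.range (deg d + 1),
    if d 1 ≤ j ∧ j - d 1 ≤ d 0 then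
      (j.choose (d 1) : ℂ) * v0 ^ (j - d 1) *
        MvPowerSeries.coeff (idx (d 0 - (j - d 1)) j) f
    else 0

/-- the coordinate x -/
def Xv : F2 := MvPowerSeries.X 0
/-- the coordinate y (alias v in the blow-up chart) -/
def Yv : F2 := MvPowerSeries.X 1

end

/-!
The substitution `y = x v` is a ring homomorphism of power series, and the chain rule together
with `x · b̃ = b(x, xv) - v a(x, xv)` shows that it intertwines `X` with its lift `X̃`; hence it
intertwines `exp X` with `exp X̃`. Since `X̃` is a derivation raising the order, each coefficient
of `exp X̃` is a finite sum, and the Leibniz rule for `X̃ⁿ` plus the Cauchy product make `exp X̃`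
multiplicative. Thus `exp X(xv)` pulls back to `exp X̃(x · v) = exp X̃(x) · exp X̃(v)`, and
`exp X̃(x)` is the pullback of `exp X(x)`.
-/

noncomputable section

open MvPowerSeries Finset

theorem Derivation.iterate_map_mul {R A : Type*} [CommSemiring R] [CommSemiring A] [Algebra R A]
    (D : Derivation R A A) (n : ℕ) (a b : A) :
    D^[n] (a * b) = ∑ ij ∈ antidiagonal n, n.choose ij.1 • (D^[ij.1] a * D^[ij.2] b) := by
  induction n with
  | zero => simp
  | succ n ih =>
    rw [sum_antidiagonal_choose_succ_nsmul (fun i j => D^[i] a * D^[j] b) n]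
    simp only [Function.iterate_succ_apply', ih, map_sum, map_nsmul, Derivation.leibniz,
      smul_eq_mul, smul_add, sum_add_distrib]
    congr 1
    refine sum_congr rfl fun ij hij => ?_
    rw [n.choose_symm_of_eq_add (mem_antidiagonal.1 hij).symm, mul_comm]

lemma deg_eq_degree (d : Fin 2 →₀ ℕ) : deg d = d.degree := by
  rw [degree_eq_sum, Fin.sum_univ_two]; rfl

lemma ordGE_iff_le_order {f : F2} {k : ℕ} : ordGE f k ↔ (k : ℕ∞) ≤ f.order := by
  simp only [ordGE, deg_eq_degree]
  refine ⟨fun h => le_order fun d hd => h d (mod_cast hd), fun h d hd => coeff_of_lt_order ?_⟩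
  exact lt_of_lt_of_le (mod_cast hd) h

lemma ordGE.mono {f : F2} {k l : ℕ} (hf : ordGE f k) (hlk : l ≤ k) : ordGE f l :=
  fun d hd => hf d (hd.trans_le hlk)

lemma ordGE.add {f g : F2} {k : ℕ} (hf : ordGE f k) (hg : ordGE g k) : ordGE (f + g) k := by
  rw [ordGE_iff_le_order] at *
  exact (le_min hf hg).trans min_order_le_add

lemma ordGE.mul {f g : F2} {k l : ℕ} (hf : ordGE f k) (hg : ordGE g l) :
    ordGE (f * g) (k + l) := by
  rw [ordGE_iff_le_order] at *
  push_cast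
  exact (add_le_add hf hg).trans le_order_mul

lemma ordGE.pderiv {f : F2} {k : ℕ} (hf : ordGE f k) (i : Fin 2) :
    ordGE (pderiv ℂ i f) (k - 1) := by
  intro d hd
  rw [coeff_pderiv, hf, zero_mul]
  rw [deg_eq_degree] at hd ⊢
  rw [map_add, degree_single]
  omega

lemma ordGE_iterate {D : F2 → F2} (hD : ∀ g k, ordGE g k → ordGE (D g) (k + 1)) (g : F2)
    (j : ℕ) : ordGE (D^[j] g) j := by
  induction j with
  | zero => exact fun d hd => absurd hd (Nat.not_lt_zero _)
  | succ j ih => rw [Function.iterate_succ_apply']; exact hD _ _ ih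

lemma pd_eq_pderiv (i : Fin 2) : pd i = pderiv ℂ i :=
  funext fun f => by ext d; rw [coeff_pderiv, mul_comm]; rfl

lemma vf_eq_derivation (a b : F2) :
    vf a b = ⇑(a • pderiv ℂ 0 + b • pderiv ℂ 1 : Derivation ℂ F2 F2) := by
  funext g
  simp [vf, pd_eq_pderiv]

lemma ordGE_vf {a b g : F2} {k : ℕ} (ha : ordGE a 2) (hb : ordGE b 2) (hg : ordGE g k) :
    ordGE (vf a b g) (k + 1) := by
  rw [vf, pd_eq_pderiv, pd_eq_pderiv]
  exact ((ha.mul (hg.pderiv 0)).add (hb.mul (hg.pderiv 1))).mono (by omega)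

def expOp (D : F2 → F2) (g : F2) : F2 :=
  fun d => ∑' j : ℕ, (j.factorial : ℂ)⁻¹ * coeff d (D^[j] g)

lemma expX_eq_expOp (a b : F2) : expX a b = expOp (vf a b) := rfl

lemma coeff_expOp (D : F2 → F2) (g : F2) (d : Fin 2 →₀ ℕ) :
    coeff d (expOp D g) = ∑' j : ℕ, (j.factorial : ℂ)⁻¹ * coeff d (D^[j] g) := rfl

lemma summable_norm_expOp_term {D : F2 → F2} (hD : ∀ g k, ordGE g k → ordGE (D g) (k + 1))
    (g : F2) (d : Fin 2 →₀ ℕ) :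
    Summable fun j : ℕ => ‖(j.factorial : ℂ)⁻¹ * coeff d (D^[j] g)‖ := by
  refine summable_of_ne_finset_zero (s := range (deg d + 1)) fun j hj => ?_
  rw [ordGE_iterate hD g j d (by rw [mem_range] at hj; omega), mul_zero, norm_zero]

lemma expOp_term_mul (D : Derivation ℂ F2 F2) (f g : F2) (d : Fin 2 →₀ ℕ) (n : ℕ) :
    (n.factorial : ℂ)⁻¹ * coeff d (D^[n] (f * g)) =
      ∑ ij ∈ antidiagonal n, ∑ pq ∈ antidiagonal d,
        (ij.1.factorial : ℂ)⁻¹ * coeff pq.1 (D^[ij.1] f) *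
          ((ij.2.factorial : ℂ)⁻¹ * coeff pq.2 (D^[ij.2] g)) := by
  rw [Derivation.iterate_map_mul, map_sum, Finset.mul_sum]
  refine sum_congr rfl fun ⟨i, j⟩ hij => ?_
  obtain rfl : i + j = n := mem_antidiagonal.1 hij
  rw [map_nsmul, nsmul_eq_mul, coeff_mul, Finset.mul_sum, Finset.mul_sum, Nat.cast_add_choose]
  have : ((i + j).factorial : ℂ) ≠ 0 := Nat.cast_ne_zero.2 (Nat.factorial_ne_zero _)
  refine sum_congr rfl fun pq _ => ?_
  field_simp

theorem expOp_mul {D : Derivation ℂ F2 F2} (hD : ∀ g k, ordGE g k → ordGE (D g) (k + 1))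
    (f g : F2) : expOp D (f * g) = expOp D f * expOp D g := by
  ext d
  rw [coeff_mul, coeff_expOp]
  simp_rw [expOp_term_mul, coeff_expOp]
  have cauchy (p q : Fin 2 →₀ ℕ) := tsum_mul_tsum_eq_tsum_sum_antidiagonal_of_summable_norm
    (summable_norm_expOp_term hD f p) (summable_norm_expOp_term hD g q)
  have summable (pq : (Fin 2 →₀ ℕ) × (Fin 2 →₀ ℕ)) :=
    (summable_norm_sum_mul_antidiagonal_of_summable_norm
      (summable_norm_expOp_term hD f pq.1) (summable_norm_expOp_term hD g pq.2)).of_norm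
  simp only [cauchy]
  rw [← Summable.tsum_finsetSum fun pq _ => summable pq]
  exact tsum_congr fun n => sum_comm

lemma expX_mul {a b : F2} (ha : ordGE a 2) (hb : ordGE b 2) (f g : F2) :
    expX a b (f * g) = expX a b f * expX a b g := by
  rw [expX_eq_expOp, vf_eq_derivation]
  exact expOp_mul (fun g k hg => by rw [← vf_eq_derivation]; exact ordGE_vf ha hb hg) f g

@[simp] lemma idx_apply_zero (m n : ℕ) : idx m n 0 = m := by simp [idx]

@[simp] lemma idx_apply_one (m n : ℕ) : idx m n 1 = n := by simp [idx]

lemma idx_self (d : Fin 2 →₀ ℕ) : idx (d 0) (d 1) = d := by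
  ext i; fin_cases i <;> simp

lemma eq_idx_iff {d : Fin 2 →₀ ℕ} {m n : ℕ} : d = idx m n ↔ d 0 = m ∧ d 1 = n := by
  constructor
  · rintro rfl; simp
  · rintro ⟨rfl, rfl⟩; exact (idx_self d).symm

lemma idx_add_single_zero (m n : ℕ) : idx m n + single 0 1 = idx (m + 1) n := by
  simp only [idx, single_add]; abel

lemma idx_add_single_one (m n : ℕ) : idx m n + single 1 1 = idx m (n + 1) := by
  simp only [idx, single_add]; abel

lemma coeff_pderiv_zero_idx (f : F2) (m n : ℕ) :
    coeff (idx m n) (pderiv ℂ 0 f) = coeff (idx (m + 1) n) f * (m + 1) := by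
  rw [coeff_pderiv, idx_add_single_zero, idx_apply_zero]

lemma coeff_pderiv_one_idx (f : F2) (m n : ℕ) :
    coeff (idx m n) (pderiv ℂ 1 f) = coeff (idx m (n + 1)) f * (n + 1) := by
  rw [coeff_pderiv, idx_add_single_one, idx_apply_one]

lemma coeff_X_zero_mul_idx (g : F2) (m n : ℕ) :
    coeff (idx (m + 1) n) (X 0 * g) = coeff (idx m n) g := by
  rw [← idx_add_single_zero, X, coeff_monomial_mul, if_pos le_add_self, one_mul,
    add_tsub_cancel_right]

lemma coeff_X_zero_mul_idx_zero (g : F2) (n : ℕ) : coeff (idx 0 n) (X 0 * g) = 0 := by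
  rw [X, coeff_monomial_mul, if_neg]
  intro h
  simpa using h 0

lemma coeff_X_one_mul_idx (g : F2) (m n : ℕ) :
    coeff (idx m (n + 1)) (X 1 * g) = coeff (idx m n) g := by
  rw [← idx_add_single_one, X, coeff_monomial_mul, if_pos le_add_self, one_mul,
    add_tsub_cancel_right]

lemma coeff_X_one_mul_idx_zero (g : F2) (m : ℕ) : coeff (idx m 0) (X 1 * g) = 0 := by
  rw [X, coeff_monomial_mul, if_neg]
  intro h
  simpa using h 1

lemma hasSubst_blowup : HasSubst ![(X 0 : F2), X 0 * X 1] :=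
  hasSubst_of_constantCoeff_zero fun i => by fin_cases i <;> simp

lemma prod_pow_blowup (d : Fin 2 →₀ ℕ) :
    (d.prod fun i k => (![(X 0 : F2), X 0 * X 1] i) ^ k) =
      monomial (idx (d 0 + d 1) (d 1)) 1 := by
  rw [Finsupp.prod_fintype _ _ (fun _ => pow_zero _), Fin.prod_univ_two]
  simp only [Fin.isValue, Matrix.cons_val_zero, Matrix.cons_val_one, mul_pow, X_pow_eq,
    monomial_mul_monomial, mul_one, idx, single_add, add_assoc]

lemma blowup_eq_subst (f : F2) : blowup f = subst ![(X 0 : F2), X 0 * X 1] f := by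
  ext e
  rw [coeff_subst hasSubst_blowup]
  simp_rw [prod_pow_blowup, coeff_monomial, eq_idx_iff]
  show (if e 1 ≤ e 0 then _ else _) = _
  split_ifs with he
  · rw [finsum_eq_single _ (idx (e 0 - e 1) (e 1))]
    · simp [he]
    · intro d hd
      rw [if_neg, smul_zero]
      rintro ⟨h0, h1⟩
      exact hd (eq_idx_iff.mpr ⟨by omega, h1.symm⟩)
  · rw [finsum_eq_zero_of_forall_eq_zero]
    intro d
    rw [if_neg, smul_zero]
    omega

lemma blowup_add (f g : F2) : blowup (f + g) = blowup f + blowup g := by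
  simp only [blowup_eq_subst, subst_add hasSubst_blowup]

lemma blowup_mul (f g : F2) : blowup (f * g) = blowup f * blowup g := by
  simp only [blowup_eq_subst, subst_mul hasSubst_blowup]

lemma blowup_X_zero : blowup (X 0) = X 0 := by
  rw [blowup_eq_subst, subst_X hasSubst_blowup]; rfl

lemma blowup_X_one : blowup (X 1) = X 0 * X 1 := by
  rw [blowup_eq_subst, subst_X hasSubst_blowup]; rfl

lemma coeff_blowup_idx {f : F2} {p m n : ℕ} (h : p = m + n) :
    coeff (idx p n) (blowup f) = coeff (idx m n) f := by
  subst h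
  simp [blowup, coeff_apply]

lemma coeff_blowup_idx_of_lt (f : F2) {m n : ℕ} (h : m < n) :
    coeff (idx m n) (blowup f) = 0 := by
  simp [blowup, coeff_apply, h.not_ge]

lemma pderiv_one_blowup (f : F2) : pderiv ℂ 1 (blowup f) = X 0 * blowup (pderiv ℂ 1 f) := by
  ext d
  obtain ⟨p, q, rfl⟩ : ∃ p q, d = idx p q := ⟨d 0, d 1, (idx_self d).symm⟩
  rw [coeff_pderiv_one_idx]
  rcases p with _ | p
  · rw [coeff_X_zero_mul_idx_zero, coeff_blowup_idx_of_lt _ q.succ_pos, zero_mul]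
  rw [coeff_X_zero_mul_idx]
  rcases lt_or_ge p q with h | h
  · rw [coeff_blowup_idx_of_lt _ h, coeff_blowup_idx_of_lt _ (by omega), zero_mul]
  · rw [coeff_blowup_idx (m := p - q) (by omega), coeff_blowup_idx (m := p - q) (by omega),
      coeff_pderiv_one_idx]

lemma pderiv_zero_blowup (f : F2) :
    pderiv ℂ 0 (blowup f) = blowup (pderiv ℂ 0 f) + X 1 * blowup (pderiv ℂ 1 f) := by
  ext d
  obtain ⟨p, q, rfl⟩ : ∃ p q, d = idx p q := ⟨d 0, d 1, (idx_self d).symm⟩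
  rw [map_add, coeff_pderiv_zero_idx]
  rcases q with _ | n
  · rw [coeff_X_one_mul_idx_zero, add_zero, coeff_blowup_idx (m := p + 1) (by omega),
      coeff_blowup_idx (m := p) (by omega), coeff_pderiv_zero_idx]
  rw [coeff_X_one_mul_idx]
  rcases lt_or_ge p n with h | h
  · rw [coeff_blowup_idx_of_lt _ (by omega), coeff_blowup_idx_of_lt _ (by omega),
      coeff_blowup_idx_of_lt _ h]
    simp
  obtain ⟨m, rfl⟩ := Nat.exists_eq_add_of_le' h
  rw [coeff_blowup_idx (m := m) (by omega)]
  rcases m with _ | k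
  · rw [coeff_blowup_idx_of_lt _ (by omega), coeff_blowup_idx (m := 0) (by omega),
      coeff_pderiv_one_idx]
    push_cast; ring
  · rw [coeff_blowup_idx (m := k) (by omega), coeff_blowup_idx (m := k + 1) (by omega),
      coeff_pderiv_zero_idx, coeff_pderiv_one_idx]
    push_cast; ring

lemma blowup_vf {a b bt : F2} (hbt : Xv * bt = blowup b - Yv * blowup a) :
    Function.Semiconj blowup (vf a b) (vf (blowup a) bt) := by
  intro g
  rw [Xv, Yv] at hbt
  simp only [vf, pd_eq_pderiv, blowup_add, blowup_mul, pderiv_zero_blowup, pderiv_one_blowup]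
  linear_combination -(blowup (pderiv ℂ 1 g)) * hbt

lemma blowup_expOp {D D' : F2 → F2} (h : Function.Semiconj blowup D D') (g : F2) :
    blowup (expOp D g) = expOp D' (blowup g) := by
  ext d
  simp only [coeff_expOp, ← (h.iterate_right _).eq g]
  show (if d 1 ≤ d 0 then _ else 0) = ∑' j : ℕ, _ * (if d 1 ≤ d 0 then _ else 0)
  split_ifs <;> simp [coeff_expOp]

lemma blowup_expX {a b bt : F2} (hbt : Xv * bt = blowup b - Yv * blowup a) (g : F2) :
    blowup (expX a b g) = expX (blowup a) bt (blowup g) :=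
  blowup_expOp (blowup_vf hbt) g

theorem second_component_of_lift_general (a b : F2)
    (bt : F2) (hbt : Xv * bt = blowup b - Yv * blowup a)
    (hbt2 : ordGE bt 2) (hba : ordGE (blowup a) 2) :
    blowup (expX a b Yv) = blowup (expX a b Xv) * expX (blowup a) bt Yv := by
  rw [blowup_expX hbt, blowup_expX hbt, Yv, Xv, blowup_X_one, blowup_X_zero]
  exact expX_mul hba hbt2 _ _

/-- exp X(y)/exp X(x) = exp X̃(v), i.e. exp X(x)·exp X̃(v) = exp X(xv) (= exp X(y)
pulled back by the chart), where X̃ = a(x,xv) ∂/∂x + ((b(x,xv) - v a(x,xv))/x) ∂/∂v is the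
pullback of X, assumed to have coefficients of order ≥ 2 (as happens at a tangent-cone point). -/
theorem second_component_of_lift (a b : F2) (ha : ordGE a 2) (hb : ordGE b 2)
    (bt : F2) (hbt : Xv * bt = blowup b - Yv * blowup a)
    (hbt2 : ordGE bt 2) (hba : ordGE (blowup a) 2) :
    blowup (expX a b Yv) = blowup (expX a b Xv) * expX (blowup a) bt Yv :=
  second_component_of_lift_general a b bt hbt hbt2 hba

end
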